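/- Let f be a Barenblatt profile with exponent α > N − 2. Suppose F(η) = α·f(η) + η·f'(η) has exactly n ≥ 1 zeros η_1 < η_2 < ⋯ < η_n in (0,∞), and that F alternates sign between consecutive roots: with η_0 = 0, the sign of F on (η_{m−1}, η_m) is (−1)^{m+1} for m = 1,…,n. Then (−1)^{m+1}·f(η_m) > 0 for every m = 1,…,n; in particular f(η_m)·f(η_{m+1}) < 0 for m = 1,…,n−1. -/

import Mathlib

/-!
On an interval `(η_{m-1}, η_m)` where `F = α f + η f'` has the constant sign `s`, the profile
solves the linear equation `f'' + ((N - 1)/η) f' = -κ F` with `κ = (1 - γ s)/2`. If `s f(η_m) ≤ 0`,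
then, since `(η^α f)' = η^(α-1) F`, `s f < 0` on the whole interval, hence `s η f' = s F - α s f > 0`
there. But `(F e^{κη²/2})' = (α + 2 - N) f' e^{κη²/2}`, so `s F e^{κη²/2}` increases strictly
from positive values up to `0 = s F(η_m) e^{κη_m²/2}`, which is absurd.
-/

/-- A Barenblatt profile with exponent `α` (dimension `N`, parameter `γ`). -/
def IsBarenblattProfile (N : ℕ) (γ α : ℝ) (f f' f'' : ℝ → ℝ) : Prop :=
  (∀ η ∈ Set.Ici (0:ℝ), HasDerivWithinAt f (f' η) (Set.Ici 0) η) ∧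
  ContinuousOn f' (Set.Ici 0) ∧
  (∀ η ∈ Set.Ioi (0:ℝ), HasDerivWithinAt f' (f'' η) (Set.Ioi 0) η) ∧
  f 0 = 1 ∧ f' 0 = 0 ∧
  (∀ η : ℝ, 0 < η →
    f'' η + (((N : ℝ) - 1) / η) * f' η =
      -(1/2) * (α * f η + η * f' η) + (γ/2) * |α * f η + η * f' η|)

open Set Real

section LinearRadialODE

variable {f f' f'' : ℝ → ℝ} {α κ N a b x : ℝ}

theorem hasDerivAt_rpow_mul (hx : 0 < x) (hf : HasDerivAt f (f' x) x) :
    HasDerivAt (fun y => y ^ α * f y) (x ^ (α - 1) * (α * f x + x * f' x)) x := by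
  refine ((hasDerivAt_rpow_const (Or.inl hx.ne')).mul hf).congr_deriv ?_
  rw [rpow_sub_one hx.ne']
  field_simp

theorem hasDerivAt_mul_exp_of_linear_ode (hx : 0 < x) (hf : HasDerivAt f (f' x) x)
    (hf' : HasDerivAt f' (f'' x) x)
    (hode : f'' x + ((N - 1) / x) * f' x = -κ * (α * f x + x * f' x)) :
    HasDerivAt (fun y => (α * f y + y * f' y) * exp (κ * y ^ 2 / 2))
      ((α + 2 - N) * f' x * exp (κ * x ^ 2 / 2)) x := by
  have hF : HasDerivAt (fun y => α * f y + y * f' y) (α * f' x + (1 * f' x + x * f'' x)) x :=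
    (hf.const_mul α).add ((hasDerivAt_id' x).mul hf')
  have hE := (((hasDerivAt_pow 2 x).const_mul κ).div_const 2).exp
  refine (hF.mul hE).congr_deriv ?_
  have hf'' : f'' x = -κ * (α * f x + x * f' x) - (N - 1) / x * f' x := by linarith
  rw [hf'']
  field_simp
  ring

theorem lt_of_hasDerivAt_pos_Ioo {g g' : ℝ → ℝ} {c : ℝ} (hcb : c < b)
    (hcont : ContinuousOn g (Icc c b)) (hg : ∀ x ∈ Ioo c b, HasDerivAt g (g' x) x)
    (hpos : ∀ x ∈ Ioo c b, 0 < g' x) : g c < g b := by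
  refine strictMonoOn_of_hasDerivWithinAt_pos (f' := g') (convex_Icc c b) hcont ?_ ?_
    (left_mem_Icc.2 hcb.le) (right_mem_Icc.2 hcb.le) hcb <;> rw [interior_Icc]
  · exact fun x hx => (hg x hx).hasDerivWithinAt
  · exact hpos

theorem neg_on_Ioo_of_nonpos_right (ha : 0 ≤ a) (hf : ∀ x ∈ Ioc a b, HasDerivAt f (f' x) x)
    (hF : ∀ x ∈ Ioo a b, 0 < α * f x + x * f' x) (hfb : f b ≤ 0) :
    ∀ x ∈ Ioo a b, f x < 0 := by
  intro x hx
  have hx0 : 0 < x := ha.trans_lt hx.1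
  have hsub : Icc x b ⊆ Ioc a b := fun y hy => ⟨hx.1.trans_le hy.1, hy.2⟩
  have hweighted : x ^ α * f x < b ^ α * f b := by
    refine lt_of_hasDerivAt_pos_Ioo hx.2
      (fun y hy => (hasDerivAt_rpow_mul (hx0.trans_le hy.1) (hf y (hsub hy))).continuousAt
        |>.continuousWithinAt)
      (fun y hy => hasDerivAt_rpow_mul (hx0.trans hy.1) (hf y (hsub (Ioo_subset_Icc_self hy))))
      fun y hy => mul_pos (rpow_pos_of_pos (hx0.trans hy.1) _) (hF y ⟨hx.1.trans hy.1, hy.2⟩)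
  have hb : b ^ α * f b ≤ 0 :=
    mul_nonpos_of_nonneg_of_nonpos (rpow_pos_of_pos (hx0.trans hx.2) _).le hfb
  exact neg_of_mul_neg_right (hweighted.trans_le hb) (rpow_pos_of_pos hx0 _).le

theorem pos_at_root_of_linear_ode (hα : 0 ≤ α) (hαN : N - 2 < α) (ha : 0 ≤ a) (hab : a < b)
    (hf : ∀ x ∈ Ioc a b, HasDerivAt f (f' x) x) (hf' : ∀ x ∈ Ioc a b, HasDerivAt f' (f'' x) x)
    (hode : ∀ x ∈ Ioo a b, f'' x + ((N - 1) / x) * f' x = -κ * (α * f x + x * f' x))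
    (hF : ∀ x ∈ Ioo a b, 0 < α * f x + x * f' x) (hFb : α * f b + b * f' b = 0) :
    0 < f b := by
  by_contra! hfb
  have hneg := neg_on_Ioo_of_nonpos_right ha hf hF hfb
  have hf'pos : ∀ x ∈ Ioo a b, 0 < f' x := fun x hx =>
    pos_of_mul_pos_right (by nlinarith [hF x hx, hneg x hx]) (ha.trans hx.1.le)
  obtain ⟨c, hc⟩ := nonempty_Ioo.2 hab
  have hsub : Icc c b ⊆ Ioc a b := fun y hy => ⟨hc.1.trans_le hy.1, hy.2⟩
  set W : ℝ → ℝ := fun y => (α * f y + y * f' y) * exp (κ * y ^ 2 / 2)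
  have hWcont : ContinuousOn W (Icc c b) := fun y hy =>
    ((((hf y (hsub hy)).continuousAt.const_mul α).add
      (continuousAt_id.mul (hf' y (hsub hy)).continuousAt)).mul (by fun_prop)).continuousWithinAt
  have hWlt : W c < W b := by
    refine lt_of_hasDerivAt_pos_Ioo (g' := fun y => (α + 2 - N) * f' y * exp (κ * y ^ 2 / 2))
      hc.2 hWcont (fun y hy => ?_) fun y hy => ?_
    · have hy : y ∈ Ioo a b := ⟨hc.1.trans hy.1, hy.2⟩
      exact hasDerivAt_mul_exp_of_linear_ode (ha.trans_lt hy.1) (hf y (Ioo_subset_Ioc_self hy))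
        (hf' y (Ioo_subset_Ioc_self hy)) (hode y hy)
    · exact mul_pos (mul_pos (by linarith) (hf'pos y ⟨hc.1.trans hy.1, hy.2⟩)) (exp_pos _)
  have hWc : 0 < W c := mul_pos (hF c hc) (exp_pos _)
  have hWb : W b = 0 := by simp only [W, hFb, zero_mul]
  linarith

end LinearRadialODE

namespace IsBarenblattProfile

variable {N : ℕ} {γ α : ℝ} {f f' f'' : ℝ → ℝ} {x : ℝ}

theorem hasDerivAt (hf : IsBarenblattProfile N γ α f f' f'') (hx : 0 < x) :
    HasDerivAt f (f' x) x :=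
  (hf.1 x hx.le).hasDerivAt (Ici_mem_nhds hx)

theorem hasDerivAt_deriv (hf : IsBarenblattProfile N γ α f f' f'') (hx : 0 < x) :
    HasDerivAt f' (f'' x) x :=
  (hf.2.2.1 x hx).hasDerivAt (Ioi_mem_nhds hx)

theorem linear_ode_of_abs_eq (hf : IsBarenblattProfile N γ α f f' f'') (hx : 0 < x) {s : ℝ}
    (habs : |α * f x + x * f' x| = s * (α * f x + x * f' x)) :
    s * f'' x + ((N - 1) / x) * (s * f' x) =
      -((1 - γ * s) / 2) * (α * (s * f x) + x * (s * f' x)) := by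
  have hode := hf.2.2.2.2.2 x hx
  rw [habs] at hode
  linear_combination s * hode

theorem sign_at_root (hf : IsBarenblattProfile N γ α f f' f'') (hα : 0 ≤ α)
    (hαN : (N : ℝ) - 2 < α) {a b s : ℝ} (ha : 0 ≤ a) (hab : a < b) (hs : |s| = 1)
    (hF : ∀ x ∈ Ioo a b, 0 < s * (α * f x + x * f' x)) (hFb : α * f b + b * f' b = 0) :
    0 < s * f b := by
  have habs : ∀ x ∈ Ioo a b, |α * f x + x * f' x| = s * (α * f x + x * f' x) := fun x hx => by
    rw [← abs_of_pos (hF x hx), abs_mul, hs, one_mul]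
  have hpos : ∀ {x}, x ∈ Ioc a b → 0 < x := fun hx => ha.trans_lt hx.1
  refine pos_at_root_of_linear_ode (f := fun y => s * f y) (f' := fun y => s * f' y)
    (f'' := fun y => s * f'' y) (κ := (1 - γ * s) / 2) hα hαN ha hab
    (fun x hx => (hf.hasDerivAt (hpos hx)).const_mul s)
    (fun x hx => (hf.hasDerivAt_deriv (hpos hx)).const_mul s)
    (fun x hx => hf.linear_ode_of_abs_eq (hpos (Ioo_subset_Ioc_self hx)) (habs x hx))
    (fun x hx => ?_) ?_
  · linear_combination hF x hx
  · linear_combination s * hFb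

end IsBarenblattProfile

theorem barenblatt_sign_at_roots_general (N : ℕ) (γ α : ℝ)
    (hα : 0 < α) (hαN : (N : ℝ) - 2 < α)
    (f f' f'' : ℝ → ℝ) (hf : IsBarenblattProfile N γ α f f' f'')
    (n : ℕ) (ηs : ℕ → ℝ) (h0 : ηs 0 = 0)
    (hmono : ∀ m : ℕ, m < n → ηs m < ηs (m + 1))
    (hroots : ∀ η : ℝ, 0 < η →
      (α * f η + η * f' η = 0 ↔ ∃ m : ℕ, 1 ≤ m ∧ m ≤ n ∧ η = ηs m))
    (halt : ∀ m : ℕ, 1 ≤ m → m ≤ n → ∀ η ∈ Set.Ioo (ηs (m - 1)) (ηs m),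
      0 < (-1 : ℝ) ^ (m + 1) * (α * f η + η * f' η)) :
    (∀ m : ℕ, 1 ≤ m → m ≤ n → 0 < (-1 : ℝ) ^ (m + 1) * f (ηs m)) ∧
    (∀ m : ℕ, 1 ≤ m → m + 1 ≤ n → f (ηs m) * f (ηs (m + 1)) < 0) := by
  have hnonneg : ∀ m ≤ n, 0 ≤ ηs m := by
    intro m
    induction m with
    | zero => exact fun _ => h0.ge
    | succ k ih => exact fun hk => (ih (by omega)).trans (hmono k hk).le
  have hsign : ∀ m, 1 ≤ m → m ≤ n → 0 < (-1 : ℝ) ^ (m + 1) * f (ηs m) := by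
    intro m hm1 hmn
    obtain ⟨k, rfl⟩ : ∃ k, m = k + 1 := ⟨m - 1, by omega⟩
    have hk : ηs k < ηs (k + 1) := hmono k hmn
    exact hf.sign_at_root hα.le hαN (hnonneg k (by omega)) hk (by simp)
      (halt _ hm1 hmn) ((hroots _ ((hnonneg k (by omega)).trans_lt hk)).2 ⟨_, hm1, hmn, rfl⟩)
  refine ⟨hsign, fun m hm1 hmn => ?_⟩
  have hcur := hsign m hm1 (by omega)
  have hnext := hsign (m + 1) (by omega) hmn
  rw [pow_succ, mul_neg_one, neg_mul] at hnext
  have hsq : (-1 : ℝ) ^ (m + 1) * (-1) ^ (m + 1) = 1 := by rw [← mul_pow]; norm_num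
  nlinarith [mul_pos hcur hnext]

/-- If `F = α f + η f'` has exactly `n` positive zeros `ηs 1 < ⋯ < ηs n`
(with `ηs 0 = 0`) and alternates sign, with sign `(-1)^(m+1)` on
`(ηs (m-1), ηs m)`, then the profile satisfies `(-1)^(m+1) f(ηs m) > 0` for
each `m = 1,…,n`; in particular `f(ηs m) f(ηs (m+1)) < 0`. -/
theorem barenblatt_sign_at_roots (N : ℕ) (hN : 1 ≤ N) (γ α : ℝ)
    (hγ₁ : -1 < γ) (hγ₂ : γ < 1) (hα : 0 < α) (hαN : (N : ℝ) - 2 < α)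
    (f f' f'' : ℝ → ℝ) (hf : IsBarenblattProfile N γ α f f' f'')
    (n : ℕ) (hn : 1 ≤ n) (ηs : ℕ → ℝ) (h0 : ηs 0 = 0)
    (hmono : ∀ m : ℕ, m < n → ηs m < ηs (m + 1))
    (hroots : ∀ η : ℝ, 0 < η →
      (α * f η + η * f' η = 0 ↔ ∃ m : ℕ, 1 ≤ m ∧ m ≤ n ∧ η = ηs m))
    (halt : ∀ m : ℕ, 1 ≤ m → m ≤ n → ∀ η ∈ Set.Ioo (ηs (m - 1)) (ηs m),
      0 < (-1 : ℝ) ^ (m + 1) * (α * f η + η * f' η)) :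
    (∀ m : ℕ, 1 ≤ m → m ≤ n → 0 < (-1 : ℝ) ^ (m + 1) * f (ηs m)) ∧
    (∀ m : ℕ, 1 ≤ m → m + 1 ≤ n → f (ηs m) * f (ηs (m + 1)) < 0) :=
  barenblatt_sign_at_roots_general N γ α hα hαN f f' f'' hf n ηs h0 hmono hroots halt
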